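/- arXiv:2408.13747 — 6 statements merged into one kernel-verified Lean document; each statement's English description precedes it below -/
import Mathlib

section
/- Let f : [0,∞) → ℝ be C³ with f''' + (1/2)·f·f'' = 0 on [0,∞), f'' ≥ 0, and suppose there is a constant C₁ > 0 with f(η) ≥ C₁·η for all η ≥ 1. Then for all η ≥ 1, 0 ≤ f''(η) ≤ f''(1)·exp(−C₁·(η² − 1)/4). -/
/-!
Since `f'' ≥ 0` and `f η ≥ C₁ η`, the equation gives `f''' = -(1/2) f f'' ≤ -(C₁ η / 2) f''`
on `[1, ∞)`; hence `exp (C₁ η² / 4)` is an integrating factor making `f''(η) exp (C₁ η² / 4)`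
nonincreasing there.
-/

open Set Real

theorem ContDiffOn.hasDerivAt_iteratedDeriv {f : ℝ → ℝ} {s : Set ℝ} {n : ℕ} {x : ℝ}
    (hf : ContDiffOn ℝ (n + 1) f s) (hs : IsOpen s) (hx : x ∈ s) :
    HasDerivAt (iteratedDeriv n f) (iteratedDeriv (n + 1) f x) x := by
  have hdiff : DifferentiableOn ℝ (iteratedDeriv n f) s :=
    (hf.differentiableOn_iteratedDerivWithin (by exact_mod_cast n.lt_succ_self)
      hs.uniqueDiffOn).congr fun y hy => (iteratedDerivWithin_of_isOpen hs hy).symm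
  rw [iteratedDeriv_succ]
  exact (hdiff.differentiableAt (hs.mem_nhds hx)).hasDerivAt

theorem antitoneOn_mul_exp_of_hasDerivAt_le {g g' u u' : ℝ → ℝ} {s : Set ℝ} (hs : Convex ℝ s)
    (hg : ContinuousOn g s) (hg' : ∀ x ∈ interior s, HasDerivAt g (g' x) x)
    (hu : ∀ x, HasDerivAt u (u' x) x) (hle : ∀ x ∈ interior s, g' x ≤ -u' x * g x) :
    AntitoneOn (fun x => g x * exp (u x)) s := by
  have hderiv : ∀ x ∈ interior s,
      HasDerivAt (fun x => g x * exp (u x)) ((g' x + u' x * g x) * exp (u x)) x := fun x hx =>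
    ((hg' x hx).mul (hu x).exp).congr_deriv (by ring)
  refine antitoneOn_of_hasDerivWithinAt_nonpos hs
    (hg.mul (continuous_exp.comp_continuousOn fun x _ => (hu x).continuousAt.continuousWithinAt))
    (fun x hx => (hderiv x hx).hasDerivWithinAt) fun x hx => ?_
  exact mul_nonpos_of_nonpos_of_nonneg (by linarith [hle x hx]) (exp_pos _).le

theorem le_mul_exp_sub_of_hasDerivAt_le {g g' u u' : ℝ → ℝ} {s : Set ℝ} (hs : Convex ℝ s)
    (hg : ContinuousOn g s) (hg' : ∀ x ∈ interior s, HasDerivAt g (g' x) x)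
    (hu : ∀ x, HasDerivAt u (u' x) x) (hle : ∀ x ∈ interior s, g' x ≤ -u' x * g x)
    {a x : ℝ} (ha : a ∈ s) (hx : x ∈ s) (hax : a ≤ x) :
    g x ≤ g a * exp (u a - u x) := by
  have h := antitoneOn_mul_exp_of_hasDerivAt_le hs hg hg' hu hle ha hx hax
  rw [exp_sub, mul_div_assoc', le_div_iff₀ (exp_pos _)]
  exact h

theorem blasius_gaussian_decay_general (f : ℝ → ℝ) (C₁ : ℝ)
    (hf : ContDiffOn ℝ 3 f (Set.Ici 0))
    (hode : ∀ η ≥ (0:ℝ), iteratedDeriv 3 f η + (1/2) * f η * iteratedDeriv 2 f η = 0)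
    (hnn : ∀ η ≥ (0:ℝ), 0 ≤ iteratedDeriv 2 f η)
    (hgrow : ∀ η ≥ (1:ℝ), C₁ * η ≤ f η) :
    ∀ η ≥ (1:ℝ), 0 ≤ iteratedDeriv 2 f η ∧
      iteratedDeriv 2 f η ≤ iteratedDeriv 2 f 1 * Real.exp (-C₁ * (η^2 - 1) / 4) := by
  have hf'' : ∀ η > (0:ℝ),
      HasDerivAt (iteratedDeriv 2 f) (-(1/2) * f η * iteratedDeriv 2 f η) η := fun η hη => by
      convert (hf.mono Ioi_subset_Ici_self).hasDerivAt_iteratedDeriv isOpen_Ioi hη using 1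
      linarith [hode η hη.le]
  have hu : ∀ η, HasDerivAt (fun η : ℝ => C₁ * η ^ 2 / 4) (C₁ * η / 2) η := fun η =>
    (((hasDerivAt_pow 2 η).const_mul C₁).div_const 4).congr_deriv (by push_cast; ring)
  have hle : ∀ η ∈ interior (Ici (1:ℝ)),
      -(1/2) * f η * iteratedDeriv 2 f η ≤ -(C₁ * η / 2) * iteratedDeriv 2 f η := by
    intro η hη
    rw [interior_Ici] at hη
    nlinarith [hnn η (by linarith [mem_Ioi.mp hη]), hgrow η (le_of_lt hη)]
  intro η hη
  refine ⟨hnn η (by linarith), ?_⟩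
  convert le_mul_exp_sub_of_hasDerivAt_le (convex_Ici 1)
    (fun x hx => (hf'' x (by linarith [mem_Ici.mp hx])).continuousAt.continuousWithinAt)
    (fun x hx => hf'' x (by rw [interior_Ici] at hx; linarith [mem_Ioi.mp hx])) hu hle
    self_mem_Ici hη hη using 3
  ring

theorem blasius_gaussian_decay (f : ℝ → ℝ) (C₁ : ℝ)
    (hf : ContDiffOn ℝ 3 f (Set.Ici 0))
    (hode : ∀ η ≥ (0:ℝ), iteratedDeriv 3 f η + (1/2) * f η * iteratedDeriv 2 f η = 0)
    (hnn : ∀ η ≥ (0:ℝ), 0 ≤ iteratedDeriv 2 f η)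
    (hC : 0 < C₁) (hgrow : ∀ η ≥ (1:ℝ), C₁ * η ≤ f η) :
    ∀ η ≥ (1:ℝ), 0 ≤ iteratedDeriv 2 f η ∧
      iteratedDeriv 2 f η ≤ iteratedDeriv 2 f 1 * Real.exp (-C₁ * (η^2 - 1) / 4) :=
  blasius_gaussian_decay_general f C₁ hf hode hnn hgrow
end

section
/- Let g : [0,∞) → ℝ be C¹ with g' nonincreasing and g'(1) > 0. Then for every x ≥ 0, g(1) − g(√((x+1)/(x+2))) ≥ g'(1)/(4·(x+1)). -/
/-! Since `g'` is nonincreasing, the mean value theorem gives `g 1 - g s ≥ g'(1) (1 - s)` for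
`s ≤ 1`. For `s = √((x+1)/(x+2))`, the bound `1 - √y ≥ (1 - y)/2` (equivalent to `(1 - √y)² ≥ 0`)
yields `1 - s ≥ 1/(2(x+2)) ≥ 1/(4(x+1))`. -/

open Set

theorem deriv_mul_sub_le_sub_of_antitoneOn_deriv {g : ℝ → ℝ} {a b : ℝ} (hab : a ≤ b)
    (hcont : ContinuousOn g (Icc a b)) (hdiff : DifferentiableOn ℝ g (Ioo a b))
    (hanti : AntitoneOn (deriv g) (Icc a b)) :
    deriv g b * (b - a) ≤ g b - g a := by
  rcases hab.eq_or_lt with rfl | hlt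
  · simp
  obtain ⟨c, hc, hslope⟩ := exists_deriv_eq_slope g hlt hcont hdiff
  have hderiv : deriv g b ≤ deriv g c :=
    hanti (Ioo_subset_Icc_self hc) (right_mem_Icc.mpr hab) hc.2.le
  calc deriv g b * (b - a) ≤ deriv g c * (b - a) :=
        mul_le_mul_of_nonneg_right hderiv (sub_nonneg.mpr hab)
    _ = g b - g a := by rw [hslope]; field_simp [(sub_pos.mpr hlt).ne']

theorem half_one_sub_le_one_sub_sqrt {y : ℝ} (hy : 0 ≤ y) : (1 - y) / 2 ≤ 1 - √y := by
  nlinarith [Real.sq_sqrt hy, sq_nonneg (1 - √y)]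

theorem one_div_four_mul_le_one_sub_sqrt {x : ℝ} (hx : 0 ≤ x) :
    1 / (4 * (x + 1)) ≤ 1 - √((x + 1) / (x + 2)) := by
  have hsqrt := half_one_sub_le_one_sub_sqrt (y := (x + 1) / (x + 2)) (by positivity)
  have hratio : (1 - (x + 1) / (x + 2)) / 2 = 1 / (2 * (x + 2)) := by
    field_simp
    ring
  calc 1 / (4 * (x + 1)) ≤ 1 / (2 * (x + 2)) :=
        one_div_le_one_div_of_le (by positivity) (by linarith)
    _ ≤ 1 - √((x + 1) / (x + 2)) := hratio ▸ hsqrt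

theorem optimality_lower_bound (g : ℝ → ℝ)
    (hg : ContDiffOn ℝ 1 g (Set.Ici 0))
    (hmono : ∀ s ∈ Set.Ici (0:ℝ), ∀ t ∈ Set.Ici (0:ℝ), s ≤ t → deriv g t ≤ deriv g s)
    (h1 : 0 < deriv g 1) :
    ∀ x ≥ (0:ℝ),
      g 1 - g (Real.sqrt ((x + 1) / (x + 2))) ≥ deriv g 1 / (4 * (x + 1)) := by
  intro x hx
  set s := √((x + 1) / (x + 2))
  have hs1 : s ≤ 1 := Real.sqrt_le_one.mpr ((div_le_one (by linarith)).mpr (by linarith))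
  have hIcc : Icc s 1 ⊆ Ici 0 := fun t ht => (Real.sqrt_nonneg _).trans ht.1
  have htangent : deriv g 1 * (1 - s) ≤ g 1 - g s :=
    deriv_mul_sub_le_sub_of_antitoneOn_deriv hs1 (hg.continuousOn.mono hIcc)
      ((hg.differentiableOn one_ne_zero).mono (Ioo_subset_Icc_self.trans hIcc))
      (fun u hu v hv huv => hmono u (hIcc hu) v (hIcc hv) huv)
  calc deriv g 1 / (4 * (x + 1)) = deriv g 1 * (1 / (4 * (x + 1))) := by ring
    _ ≤ deriv g 1 * (1 - s) := mul_le_mul_of_nonneg_left (one_div_four_mul_le_one_sub_sqrt hx) h1.le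
    _ ≤ g 1 - g s := htangent
end

section
/- Let α ∈ [0,1] and let φ : [0,∞) → ℝ be C¹ with φ(0) = 0, φ ∈ L²(0,∞), φ' ∈ L²(0,∞), and M := ∫₀^∞ ψ^α·|φ(ψ)| dψ < ∞. Then there is a constant C = C(α) such that ‖φ‖_{L²(0,∞)}^{3+2α} ≤ C·M²·‖φ'‖_{L²(0,∞)}^{1+2α}. -/
open MeasureTheory Real Set

/-! Since `φ 0 = 0`, `φ x ^ 2 = 2 ∫₀ˣ φ φ' ≤ 2 ‖φ‖₂ ‖φ'‖₂` by Cauchy–Schwarz, so `|φ| ≤ L` with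
`L ^ 2 = 2 ‖φ‖₂ ‖φ'‖₂`. Split `‖φ‖₂²` at `R`: the part over `(0, R]` is at most `R L²`, and on
`(R, ∞)` we have `φ² ≤ L |φ| ≤ L R^(-α) ψ^α |φ|`, whence `‖φ‖₂² ≤ R L² + L M R^(-α)`.
The choice `R = ‖φ‖₂² / (2 L²)` gives `‖φ‖₂^(2 + 2α) ≤ 2^(1+α) L^(1+2α) M`, and substituting `L`
yields the inequality with `C = 2^(3+4α)`. -/

theorem integral_abs_mul_le_sqrt_mul_sqrt {X : Type*} [MeasurableSpace X] {μ : Measure X}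
    {f g : X → ℝ} (hf : MemLp f 2 μ) (hg : MemLp g 2 μ) :
    ∫ x, |f x * g x| ∂μ ≤ √(∫ x, f x ^ 2 ∂μ) * √(∫ x, g x ^ 2 ∂μ) := by
  have h := integral_mul_norm_le_Lp_mul_Lq (p := 2) (q := 2) HolderConjugate.two_two
    (by simpa using hf) (by simpa using hg)
  rw [sqrt_eq_rpow, sqrt_eq_rpow]
  simpa only [norm_eq_abs, ← abs_mul, rpow_two, sq_abs] using h

theorem sq_le_two_mul_integral_abs_mul_of_hasDerivAt {f f' : ℝ → ℝ} (hf : ContinuousOn f (Ici 0))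
    (hf' : ∀ x ∈ Ioi 0, HasDerivAt f (f' x) x) (hf0 : f 0 = 0)
    (hint : IntegrableOn (fun x => f x * f' x) (Ioi 0)) {x : ℝ} (hx : 0 ≤ x) :
    f x ^ 2 ≤ 2 * ∫ y in Ioi 0, |f y * f' y| := by
  have hint_x : IntegrableOn (fun y => f y * f' y) (Ioc 0 x) := hint.mono_set Ioc_subset_Ioi_self
  have hftc : ∫ y in 0..x, 2 * (f y * f' y) = f x ^ 2 := by
    rw [intervalIntegral.integral_eq_sub_of_hasDerivAt_of_le hx
      ((hf.mono Icc_subset_Ici_self).pow 2) (fun y hy => ?_)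
      ((intervalIntegrable_iff_integrableOn_Ioc_of_le hx).2 (hint_x.const_mul 2))]
    · simp [hf0]
    · simpa [mul_assoc] using (hf' y hy.1).pow 2
  calc f x ^ 2 = 2 * ∫ y in Ioc 0 x, f y * f' y := by
        rw [← hftc, intervalIntegral.integral_const_mul, intervalIntegral.integral_of_le hx]
    _ ≤ 2 * ∫ y in Ioc 0 x, |f y * f' y| :=
        mul_le_mul_of_nonneg_left ((le_abs_self _).trans abs_integral_le_integral_abs)
          zero_le_two
    _ ≤ 2 * ∫ y in Ioi 0, |f y * f' y| :=
        mul_le_mul_of_nonneg_left (setIntegral_mono_set hint.abs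
          (.of_forall fun _ => abs_nonneg _) Ioc_subset_Ioi_self.eventuallyLE) zero_le_two

theorem integral_sq_le_of_abs_le {f : ℝ → ℝ} {α L R : ℝ} (hα : 0 ≤ α) (hR : 0 < R)
    (hfL : ∀ x ∈ Ioi 0, |f x| ≤ L) (hf2 : IntegrableOn (fun x => f x ^ 2) (Ioi 0))
    (hfw : IntegrableOn (fun x => x ^ α * |f x|) (Ioi 0)) :
    ∫ x in Ioi 0, f x ^ 2 ≤ R * L ^ 2 + L * (∫ x in Ioi 0, x ^ α * |f x|) / R ^ α := by
  have hL : 0 ≤ L := (abs_nonneg _).trans (hfL R hR)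
  have hRα : 0 < R ^ α := rpow_pos_of_pos hR α
  have hnear : ∫ x in Ioc 0 R, f x ^ 2 ≤ R * L ^ 2 := by
    calc ∫ x in Ioc 0 R, f x ^ 2 ≤ ∫ _ in Ioc 0 R, L ^ 2 :=
          setIntegral_mono_on (hf2.mono_set Ioc_subset_Ioi_self)
            (integrableOn_const measure_Ioc_lt_top.ne) measurableSet_Ioc
            fun x hx => sq_le_sq' (abs_le.1 (hfL x hx.1)).1 (abs_le.1 (hfL x hx.1)).2
      _ = R * L ^ 2 := by simp [hR.le]
  have hfar : ∫ x in Ioi R, f x ^ 2 ≤ L * (∫ x in Ioi 0, x ^ α * |f x|) / R ^ α := by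
    have hpt : ∀ x ∈ Ioi R, f x ^ 2 ≤ L / R ^ α * (x ^ α * |f x|) := fun x hx => by
      have hx0 : 0 < x := hR.trans hx
      have hRx : R ^ α ≤ x ^ α := rpow_le_rpow hR.le (le_of_lt hx) hα
      calc f x ^ 2 = |f x| * |f x| := by rw [abs_mul_abs_self, sq]
        _ ≤ L * |f x| := by gcongr; exact hfL x hx0
        _ = L / R ^ α * (R ^ α * |f x|) := by field_simp
        _ ≤ L / R ^ α * (x ^ α * |f x|) := by gcongr
    calc ∫ x in Ioi R, f x ^ 2 ≤ ∫ x in Ioi R, L / R ^ α * (x ^ α * |f x|) :=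
          setIntegral_mono_on (hf2.mono_set (Ioi_subset_Ioi hR.le))
            ((hfw.mono_set (Ioi_subset_Ioi hR.le)).const_mul _) measurableSet_Ioi hpt
      _ ≤ L / R ^ α * ∫ x in Ioi 0, x ^ α * |f x| := by
        rw [integral_const_mul]
        refine mul_le_mul_of_nonneg_left ?_ (by positivity)
        exact setIntegral_mono_set hfw
          ((ae_restrict_mem measurableSet_Ioi).mono fun x hx =>
            mul_nonneg (rpow_nonneg (le_of_lt hx) _) (abs_nonneg _))
          (Ioi_subset_Ioi hR.le).eventuallyLE
      _ = L * (∫ x in Ioi 0, x ^ α * |f x|) / R ^ α := by ring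
  have hsplit : ∫ x in Ioi 0, f x ^ 2 = (∫ x in Ioc 0 R, f x ^ 2) + ∫ x in Ioi R, f x ^ 2 := by
    rw [← setIntegral_union (Ioc_disjoint_Ioi le_rfl) measurableSet_Ioi
      (hf2.mono_set Ioc_subset_Ioi_self) (hf2.mono_set (Ioi_subset_Ioi hR.le)),
      Ioc_union_Ioi_eq_Ioi hR.le]
  linarith

theorem rpow_one_add_le_of_forall_le_add_div_rpow {α N L M : ℝ} (hα : 0 ≤ α) (hN : 0 ≤ N)
    (hL : 0 ≤ L) (hM : 0 ≤ M) (h : ∀ R > 0, N ≤ R * L ^ 2 + L * M / R ^ α) :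
    N ^ (1 + α) ≤ 2 ^ (1 + α) * L ^ (1 + 2 * α) * M := by
  rcases hN.eq_or_lt with rfl | hN
  · rw [zero_rpow (by positivity)]
    positivity
  rcases hL.eq_or_lt with rfl | hL
  · have := h 1 one_pos
    norm_num at this
    linarith
  have hR := h (N / (2 * L ^ 2)) (by positivity)
  rw [div_rpow hN.le (by positivity), mul_rpow zero_le_two (by positivity),
    ← rpow_natCast_mul hL.le] at hR
  field_simp at hR
  push_cast at hR
  rw [rpow_add hN, rpow_one, rpow_add two_pos, rpow_one, rpow_add hL, rpow_one]
  linarith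

theorem rpow_le_of_rpow_one_add_le {α N D L M : ℝ} (hα : 0 ≤ α) (hN : 0 ≤ N) (hD : 0 ≤ D)
    (hL : 0 ≤ L) (hL4 : L ^ 4 ≤ 4 * N * D)
    (h : N ^ (1 + α) ≤ 2 ^ (1 + α) * L ^ (1 + 2 * α) * M) :
    N ^ ((3 + 2 * α) / 2) ≤ 2 ^ (3 + 4 * α) * M ^ 2 * D ^ ((1 + 2 * α) / 2) := by
  rcases hN.eq_or_lt with rfl | hN
  · rw [zero_rpow (by positivity)]
    positivity
  set p := (1 + 2 * α) / 2 with hp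
  have hL2 : (L ^ (1 + 2 * α)) ^ 2 = (L ^ 4) ^ p := by
    rw [← rpow_mul_natCast hL, ← rpow_natCast_mul hL]
    congr 1
    push_cast
    ring
  have h4 : (4 * N * D) ^ p = 2 ^ (1 + 2 * α) * N ^ p * D ^ p := by
    rw [mul_rpow (by positivity) hD, mul_rpow zero_le_four hN.le,
      show (4 : ℝ) = 2 ^ (2 : ℝ) by norm_num, ← rpow_mul zero_le_two,
      show 2 * p = 1 + 2 * α by rw [hp]; ring]
  have hsq : N ^ ((3 + 2 * α) / 2) * N ^ p = (N ^ (1 + α)) ^ 2 := by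
    rw [← rpow_add hN, ← rpow_mul_natCast hN.le]
    congr 1
    push_cast
    ring
  have hNp : 0 < N ^ p := rpow_pos_of_pos hN p
  refine le_of_mul_le_mul_right ?_ hNp
  calc N ^ ((3 + 2 * α) / 2) * N ^ p = (N ^ (1 + α)) ^ 2 := hsq
    _ ≤ (2 ^ (1 + α) * L ^ (1 + 2 * α) * M) ^ 2 := pow_le_pow_left₀ (by positivity) h 2
    _ = (2 ^ (1 + α)) ^ 2 * (L ^ 4) ^ p * M ^ 2 := by rw [mul_pow, mul_pow, hL2]
    _ ≤ (2 ^ (1 + α)) ^ 2 * (4 * N * D) ^ p * M ^ 2 := by gcongr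
    _ = 2 ^ (3 + 4 * α) * M ^ 2 * D ^ p * N ^ p := by
      have h2 : ((2 : ℝ) ^ (1 + α)) ^ 2 * 2 ^ (1 + 2 * α) = 2 ^ (3 + 4 * α) := by
        rw [← rpow_mul_natCast zero_le_two, ← rpow_add two_pos]
        congr 1
        push_cast
        ring
      rw [h4]
      linear_combination (M ^ 2 * N ^ p * D ^ p) * h2

theorem nash_weighted_interpolation (α : ℝ) (hα : α ∈ Set.Icc (0:ℝ) 1) :
    ∃ C > (0:ℝ), ∀ φ : ℝ → ℝ,
      ContDiffOn ℝ 1 φ (Set.Ici 0) → φ 0 = 0 →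
      MeasureTheory.IntegrableOn (fun ψ => φ ψ ^ 2) (Set.Ioi 0) →
      MeasureTheory.IntegrableOn (fun ψ => (deriv φ ψ) ^ 2) (Set.Ioi 0) →
      MeasureTheory.IntegrableOn (fun ψ => ψ ^ α * |φ ψ|) (Set.Ioi 0) →
      (∫ ψ in Set.Ioi (0:ℝ), φ ψ ^ 2) ^ ((3 + 2*α) / 2) ≤
        C * (∫ ψ in Set.Ioi (0:ℝ), ψ ^ α * |φ ψ|) ^ 2 *
          (∫ ψ in Set.Ioi (0:ℝ), (deriv φ ψ) ^ 2) ^ ((1 + 2*α) / 2) := by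
  refine ⟨2 ^ (3 + 4 * α), by positivity, fun φ hφ hφ0 hN hD hM => ?_⟩
  set N := ∫ ψ in Ioi (0:ℝ), φ ψ ^ 2
  set D := ∫ ψ in Ioi (0:ℝ), deriv φ ψ ^ 2
  set L := √(2 * √N * √D)
  have hφL2 : MemLp φ 2 (volume.restrict (Ioi 0)) := (memLp_two_iff_integrable_sq
    ((hφ.continuousOn.mono Ioi_subset_Ici_self).aestronglyMeasurable measurableSet_Ioi)).2 hN
  have hφ'L2 : MemLp (deriv φ) 2 (volume.restrict (Ioi 0)) :=
    (memLp_two_iff_integrable_sq (measurable_deriv φ).aestronglyMeasurable).2 hD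
  have hderiv : ∀ x ∈ Ioi (0:ℝ), HasDerivAt φ (deriv φ x) x := fun x hx =>
    ((hφ.contDiffAt (Ici_mem_nhds hx)).differentiableAt one_ne_zero).hasDerivAt
  have hsup : ∀ x ∈ Ioi (0:ℝ), |φ x| ≤ L := fun x hx => abs_le_sqrt <| by
    calc φ x ^ 2 ≤ 2 * ∫ y in Ioi 0, |φ y * deriv φ y| :=
          sq_le_two_mul_integral_abs_mul_of_hasDerivAt hφ.continuousOn hderiv hφ0
            (hφL2.integrable_mul hφ'L2) hx.le
      _ ≤ 2 * √N * √D := by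
          rw [mul_assoc]
          exact mul_le_mul_of_nonneg_left (integral_abs_mul_le_sqrt_mul_sqrt hφL2 hφ'L2)
            zero_le_two
  have hN0 : 0 ≤ N := setIntegral_nonneg measurableSet_Ioi fun _ _ => sq_nonneg _
  have hD0 : 0 ≤ D := setIntegral_nonneg measurableSet_Ioi fun _ _ => sq_nonneg _
  have hM0 : 0 ≤ ∫ ψ in Ioi (0:ℝ), ψ ^ α * |φ ψ| := setIntegral_nonneg measurableSet_Ioi
    fun ψ hψ => mul_nonneg (rpow_nonneg (le_of_lt hψ) _) (abs_nonneg _)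
  have hL4 : L ^ 4 = 4 * N * D := by
    rw [show L ^ 4 = (L ^ 2) ^ 2 by ring, sq_sqrt (by positivity), mul_pow, mul_pow,
      sq_sqrt hN0, sq_sqrt hD0]
    ring
  exact rpow_le_of_rpow_one_add_le hα.1 hN0 hD0 (sqrt_nonneg _) hL4.le
    (rpow_one_add_le_of_forall_le_add_div_rpow hα.1 hN0 (sqrt_nonneg _) hM0
      fun R hR => integral_sq_le_of_abs_le hα.1 hR hsup hN hM)
end

section
/- Let s ∈ (0,1) and let φ : [0,∞) → ℝ be C¹ with φ(0) = 0, with D := ∫₀^∞ |φ'(ψ)|² dψ < ∞ and W := ∫₀^∞ |φ(ψ)|²·ψ^s dψ < ∞. Then there is a constant C = C(s) such that ∫₀^∞ |φ(ψ)|² dψ ≤ C·D^{s/(2+s)}·W^{2/(2+s)}. -/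
/-!
Since `φ 0 = 0`, Cauchy–Schwarz applied to `φ ψ = ∫₀^ψ φ'` gives `φ ψ ^ 2 ≤ ψ D`, hence
`∫₀^r φ ^ 2 ≤ D r ^ 2 / 2`, while `ψ ^ s ≥ r ^ s` beyond `r` gives `∫_r^∞ φ ^ 2 ≤ W r ^ (-s)`.
The choice `r = (W / D) ^ (1 / (2 + s))` balances the two terms and yields the bound with
`C = 3 / 2`; the degenerate cases `D = 0` or `W = 0` follow by replacing `D`, `W` with `D + ε`,
`W + ε` and letting `ε → 0`.
-/

open MeasureTheory Set Real Filter Topology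

theorem sq_integral_le_measureReal_mul_integral_sq {α : Type*} [MeasurableSpace α]
    {μ : Measure α} [IsFiniteMeasure μ] {f : α → ℝ} (hf : MemLp f 2 μ) :
    (∫ x, f x ∂μ) ^ 2 ≤ μ.real univ * ∫ x, f x ^ 2 ∂μ := by
  rcases eq_zero_or_neZero μ with rfl | hμ
  · simp
  have hpos : 0 < μ.real univ := by simp [measureReal_def, ENNReal.toReal_pos_iff, NeZero.ne]
  have jensen := (Even.convexOn_pow even_two).map_average_le (continuous_pow 2).continuousOn
    isClosed_univ (by simp) (hf.integrable one_le_two) hf.integrable_sq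
  simp only [average_eq, smul_eq_mul] at jensen
  rwa [mul_pow, inv_pow, sq (μ.real univ), mul_inv, mul_assoc,
    mul_le_mul_iff_right₀ (inv_pos.mpr hpos), inv_mul_le_iff₀ hpos] at jensen

theorem sq_sub_le_mul_integral_sq_deriv {f f' : ℝ → ℝ} {a b : ℝ} (hab : a ≤ b)
    (hf : ContinuousOn f (Icc a b)) (hderiv : ∀ x ∈ Ioo a b, HasDerivAt f (f' x) x)
    (hf' : MemLp f' 2 (volume.restrict (Ioc a b))) :
    (f b - f a) ^ 2 ≤ (b - a) * ∫ x in Ioc a b, f' x ^ 2 := by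
  have hint : IntervalIntegrable f' volume a b :=
    (intervalIntegrable_iff_integrableOn_Ioc_of_le hab).2 (hf'.integrable one_le_two)
  rw [← intervalIntegral.integral_eq_sub_of_hasDerivAt_of_le hab hf hderiv hint,
    intervalIntegral.integral_of_le hab]
  simpa [Real.volume_real_Ioc_of_le hab] using sq_integral_le_measureReal_mul_integral_sq hf'

theorem le_rpow_neg_mul_mul_rpow {x r s ψ : ℝ} (hx : 0 ≤ x) (hr : 0 < r) (hs : 0 ≤ s)
    (hrψ : r ≤ ψ) : x ≤ r ^ (-s) * (x * ψ ^ s) := by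
  rw [rpow_neg hr.le, le_inv_mul_iff₀ (rpow_pos_of_pos hr s), mul_comm (r ^ s)]
  exact mul_le_mul_of_nonneg_left (rpow_le_rpow hr.le hrψ hs) hx

theorem integrableOn_Ioi_of_integrableOn_mul_rpow {f : ℝ → ℝ} {r s : ℝ} (hr : 0 < r)
    (hs : 0 ≤ s) (hf : ∀ ψ, 0 ≤ f ψ) (hfm : AEStronglyMeasurable f (volume.restrict (Ioi r)))
    (hW : IntegrableOn (fun ψ => f ψ * ψ ^ s) (Ioi 0)) : IntegrableOn f (Ioi r) :=
  ((hW.mono_set (Ioi_subset_Ioi hr.le)).const_mul (r ^ (-s))).mono' hfm <| by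
    filter_upwards [ae_restrict_mem measurableSet_Ioi] with ψ hψ
    rw [norm_of_nonneg (hf ψ)]
    exact le_rpow_neg_mul_mul_rpow (hf ψ) hr hs (le_of_lt hψ)

theorem setIntegral_Ioi_le_rpow_neg_mul {f : ℝ → ℝ} {r s : ℝ} (hr : 0 < r) (hs : 0 ≤ s)
    (hf : ∀ ψ, 0 ≤ f ψ) (hfm : AEStronglyMeasurable f (volume.restrict (Ioi r)))
    (hW : IntegrableOn (fun ψ => f ψ * ψ ^ s) (Ioi 0)) :
    ∫ ψ in Ioi r, f ψ ≤ r ^ (-s) * ∫ ψ in Ioi 0, f ψ * ψ ^ s := by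
  have hWr := hW.mono_set (Ioi_subset_Ioi hr.le)
  calc ∫ ψ in Ioi r, f ψ ≤ ∫ ψ in Ioi r, r ^ (-s) * (f ψ * ψ ^ s) :=
        setIntegral_mono_on (integrableOn_Ioi_of_integrableOn_mul_rpow hr hs hf hfm hW)
          (hWr.const_mul _) measurableSet_Ioi
          fun ψ hψ => le_rpow_neg_mul_mul_rpow (hf ψ) hr hs (le_of_lt hψ)
    _ ≤ r ^ (-s) * ∫ ψ in Ioi 0, f ψ * ψ ^ s := by
      rw [integral_const_mul]
      refine mul_le_mul_of_nonneg_left (setIntegral_mono_set hW ?_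
        (Ioi_subset_Ioi hr.le).eventuallyLE) (rpow_nonneg hr.le _)
      filter_upwards [ae_restrict_mem measurableSet_Ioi] with ψ hψ
      exact mul_nonneg (hf ψ) (rpow_nonneg (le_of_lt hψ) s)

theorem sq_le_mul_integral_sq_deriv {φ : ℝ → ℝ} (hφ : ContDiffOn ℝ 1 φ (Ici 0)) (hφ0 : φ 0 = 0)
    (hD : IntegrableOn (fun ψ => deriv φ ψ ^ 2) (Ioi 0)) {ψ : ℝ} (hψ : 0 ≤ ψ) :
    φ ψ ^ 2 ≤ ψ * ∫ t in Ioi 0, deriv φ t ^ 2 := by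
  have hderiv : ∀ x ∈ Ioo 0 ψ, HasDerivAt φ (deriv φ x) x := fun x hx =>
    ((hφ.contDiffAt (Ici_mem_nhds hx.1)).differentiableAt one_ne_zero).hasDerivAt
  have hL2 : MemLp (deriv φ) 2 (volume.restrict (Ioc 0 ψ)) :=
    (memLp_two_iff_integrable_sq (measurable_deriv φ).aestronglyMeasurable).2
      (hD.mono_set Ioc_subset_Ioi_self)
  calc φ ψ ^ 2 = (φ ψ - φ 0) ^ 2 := by rw [hφ0, sub_zero]
    _ ≤ (ψ - 0) * ∫ t in Ioc 0 ψ, deriv φ t ^ 2 :=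
      sq_sub_le_mul_integral_sq_deriv hψ (hφ.continuousOn.mono Icc_subset_Ici_self) hderiv hL2
    _ ≤ ψ * ∫ t in Ioi 0, deriv φ t ^ 2 := by
      rw [sub_zero]
      exact mul_le_mul_of_nonneg_left (setIntegral_mono_set hD (.of_forall fun t => sq_nonneg _)
        Ioc_subset_Ioi_self.eventuallyLE) hψ

theorem setIntegral_sq_le_head_add_tail {φ : ℝ → ℝ} (hφ : ContDiffOn ℝ 1 φ (Ici 0)) (hφ0 : φ 0 = 0)
    (hD : IntegrableOn (fun ψ => deriv φ ψ ^ 2) (Ioi 0)) {s r : ℝ} (hs : 0 ≤ s) (hr : 0 < r)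
    (hW : IntegrableOn (fun ψ => φ ψ ^ 2 * ψ ^ s) (Ioi 0)) :
    ∫ ψ in Ioi 0, φ ψ ^ 2 ≤
      (∫ ψ in Ioi 0, deriv φ ψ ^ 2) * r ^ 2 / 2 + (∫ ψ in Ioi 0, φ ψ ^ 2 * ψ ^ s) * r ^ (-s) := by
  have hcont : ContinuousOn (fun ψ => φ ψ ^ 2) (Ici 0) := hφ.continuousOn.pow 2
  have hmeas : AEStronglyMeasurable (fun ψ => φ ψ ^ 2) (volume.restrict (Ioi r)) :=
    (hcont.mono fun x hx => le_of_lt (hr.trans hx)).aestronglyMeasurable measurableSet_Ioi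
  have hhead : IntegrableOn (fun ψ => φ ψ ^ 2) (Ioc 0 r) :=
    (hcont.mono Icc_subset_Ici_self).integrableOn_Icc.mono_set Ioc_subset_Icc_self
  have htail : IntegrableOn (fun ψ => φ ψ ^ 2) (Ioi r) :=
    integrableOn_Ioi_of_integrableOn_mul_rpow hr hs (fun ψ => sq_nonneg _) hmeas hW
  have hhead_le : ∫ ψ in Ioc 0 r, φ ψ ^ 2 ≤ (∫ ψ in Ioi 0, deriv φ ψ ^ 2) * r ^ 2 / 2 := by
    refine (setIntegral_mono_on hhead (continuous_mul_const _).integrableOn_Ioc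
      measurableSet_Ioc fun ψ hψ => sq_le_mul_integral_sq_deriv hφ hφ0 hD hψ.1.le).trans_eq ?_
    rw [← intervalIntegral.integral_of_le hr.le, intervalIntegral.integral_mul_const, integral_id]
    ring
  rw [← Ioc_union_Ioi_eq_Ioi hr.le, setIntegral_union (Ioc_disjoint_Ioi le_rfl) measurableSet_Ioi
    hhead htail, Ioc_union_Ioi_eq_Ioi hr.le, mul_comm _ (r ^ (-s))]
  exact add_le_add hhead_le
    (setIntegral_Ioi_le_rpow_neg_mul hr hs (fun ψ => sq_nonneg _) hmeas hW)

theorem exists_pos_mul_sq_div_two_add_mul_rpow_neg_eq {s D W : ℝ} (hs : 0 < s) (hD : 0 < D)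
    (hW : 0 < W) :
    ∃ r > 0, D * r ^ 2 / 2 + W * r ^ (-s) = 3 / 2 * D ^ (s / (2 + s)) * W ^ (2 / (2 + s)) := by
  have h2s : (0 : ℝ) < 2 + s := by linarith
  set a := D ^ (2 + s)⁻¹
  set b := W ^ (2 + s)⁻¹
  have ha : 0 < a := rpow_pos_of_pos hD _
  have hb : 0 < b := rpow_pos_of_pos hW _
  have hDa : D = a ^ 2 * a ^ s := by
    rw [← rpow_two, ← rpow_add ha, ← rpow_mul hD.le, inv_mul_cancel₀ h2s.ne', rpow_one]
  have hWb : W = b ^ 2 * b ^ s := by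
    rw [← rpow_two, ← rpow_add hb, ← rpow_mul hW.le, inv_mul_cancel₀ h2s.ne', rpow_one]
  have hDs : D ^ (s / (2 + s)) = a ^ s := by
    rw [← rpow_mul hD.le, inv_mul_eq_div]
  have hW2 : W ^ (2 / (2 + s)) = b ^ 2 := by
    rw [← rpow_two, ← rpow_mul hW.le, inv_mul_eq_div]
  -- `b / a = (W / D) ^ (1 / (2 + s))` balances the two terms: `D * r ^ 2 = W * r ^ (-s)`.
  refine ⟨b / a, div_pos hb ha, ?_⟩
  rw [hDs, hW2, rpow_neg (div_pos hb ha).le, div_rpow hb.le ha.le, hDa, hWb, div_pow]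
  have := (rpow_pos_of_pos ha s).ne'
  have := (rpow_pos_of_pos hb s).ne'
  field_simp
  ring

theorem le_of_forall_le_mul_sq_div_two_add_mul_rpow_neg {s D W X : ℝ} (hs : 0 < s)
    (hD : 0 ≤ D) (hW : 0 ≤ W) (h : ∀ r > 0, X ≤ D * r ^ 2 / 2 + W * r ^ (-s)) :
    X ≤ 3 / 2 * D ^ (s / (2 + s)) * W ^ (2 / (2 + s)) := by
  have h2s : (0 : ℝ) < 2 + s := by linarith
  have hε : ∀ ε > 0, X ≤ 3 / 2 * (D + ε) ^ (s / (2 + s)) * (W + ε) ^ (2 / (2 + s)) := by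
    intro ε hε
    obtain ⟨r, hr, hr_eq⟩ :=
      exists_pos_mul_sq_div_two_add_mul_rpow_neg_eq hs (add_pos_of_nonneg_of_pos hD hε)
        (add_pos_of_nonneg_of_pos hW hε)
    refine (h r hr).trans (hr_eq ▸ ?_)
    gcongr <;> linarith
  have hcont : Continuous fun ε : ℝ =>
      3 / 2 * (D + ε) ^ (s / (2 + s)) * (W + ε) ^ (2 / (2 + s)) := by
    fun_prop (disch := positivity)
  exact ge_of_tendsto (by simpa using (hcont.tendsto 0).mono_left nhdsWithin_le_nhds)
    (eventually_nhdsWithin_of_forall (s := Ioi 0) hε)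

theorem weighted_L2_interpolation (s : ℝ) (hs : s ∈ Set.Ioo (0:ℝ) 1) :
    ∃ C > (0:ℝ), ∀ φ : ℝ → ℝ,
      ContDiffOn ℝ 1 φ (Set.Ici 0) → φ 0 = 0 →
      MeasureTheory.IntegrableOn (fun ψ => (deriv φ ψ) ^ 2) (Set.Ioi 0) →
      MeasureTheory.IntegrableOn (fun ψ => φ ψ ^ 2 * ψ ^ s) (Set.Ioi 0) →
      (∫ ψ in Set.Ioi (0:ℝ), φ ψ ^ 2) ≤
        C * (∫ ψ in Set.Ioi (0:ℝ), (deriv φ ψ) ^ 2) ^ (s / (2 + s)) *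
          (∫ ψ in Set.Ioi (0:ℝ), φ ψ ^ 2 * ψ ^ s) ^ (2 / (2 + s)) := by
  refine ⟨3 / 2, by norm_num, fun φ hφ hφ0 hD hW => ?_⟩
  have hD_nonneg : 0 ≤ ∫ ψ in Ioi 0, deriv φ ψ ^ 2 :=
    setIntegral_nonneg measurableSet_Ioi fun _ _ => sq_nonneg _
  have hW_nonneg : 0 ≤ ∫ ψ in Ioi 0, φ ψ ^ 2 * ψ ^ s :=
    setIntegral_nonneg measurableSet_Ioi fun ψ hψ =>
      mul_nonneg (sq_nonneg _) (rpow_nonneg (le_of_lt hψ) s)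
  exact le_of_forall_le_mul_sq_div_two_add_mul_rpow_neg hs.1 hD_nonneg hW_nonneg
    fun r hr => setIntegral_sq_le_head_add_tail hφ hφ0 hD hs.1.le hr hW
end

section
/- Let c₀, c₁ > 0, p > 1, b > 0, β > 0 with β·p ≤ b and β·p ≤ β + 1. Let A : [0,∞) → [0,∞) be continuously differentiable and satisfy A'(X) + c₀·A(X)^p ≤ c₁·(X+1)^{−b} for all X ≥ 0. Then there exists a constant D > 0 (depending only on c₀, c₁, p, β, and A(0)) such that A(X) ≤ D·(X+1)^{−β} for all X ≥ 0. -/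
/-!
The function `B X = D * (X + 1) ^ (-β)` is a barrier for `A`: if `D ≥ A 0` and
`c₀ * D ^ p > c₁ + β * D` (true for all large `D`, as `p > 1`), then at any first point where
`A` touches `B` the differential inequality, together with `β * p ≤ b` and `β * p ≤ β + 1`,
forces `A' < B'`, so `A` can never cross `B`.
-/

open Filter Real Set

lemma eventually_add_mul_lt_mul_rpow {c₀ p : ℝ} (hc₀ : 0 < c₀) (hp : 1 < p) (c₁ β : ℝ) :
    ∀ᶠ D in atTop, c₁ + β * D < c₀ * D ^ p := by
  have hgrowth : Tendsto (fun D : ℝ => D * (c₀ * D ^ (p - 1) - β)) atTop atTop :=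
    tendsto_id.atTop_mul_atTop₀ <| tendsto_atTop_add_const_right _ _ <|
      (tendsto_rpow_atTop (by linarith)).const_mul_atTop hc₀
  filter_upwards [hgrowth.eventually_gt_atTop c₁, eventually_gt_atTop 0] with D hD hD0
  have hsplit : D ^ p = D ^ (p - 1) * D := by
    rw [← rpow_add_one hD0.ne', sub_add_cancel]
  rw [hsplit]
  linarith

lemma hasDerivAt_mul_add_one_rpow_neg (D β : ℝ) {x : ℝ} (hx : -1 < x) :
    HasDerivAt (fun x => D * (x + 1) ^ (-β)) (-(β * D) * (x + 1) ^ (-(β + 1))) x := by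
  have hx1 : x + 1 ≠ 0 := by linarith
  refine ((((hasDerivAt_id x).add_const 1).rpow_const (Or.inl hx1)).const_mul D).congr_deriv ?_
  rw [show -β - 1 = -(β + 1) by ring]
  simp only [id]
  ring

lemma lt_neg_mul_rpow_of_touching {c₀ c₁ p b β D t a' : ℝ} (hc₁ : 0 ≤ c₁) (hβ : 0 ≤ β)
    (hD : 0 < D) (h1 : β * p ≤ b) (h2 : β * p ≤ β + 1) (hD_large : c₁ + β * D < c₀ * D ^ p)
    (ht : 1 ≤ t) (h : a' + c₀ * (D * t ^ (-β)) ^ p ≤ c₁ * t ^ (-b)) :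
    a' < -(β * D) * t ^ (-(β + 1)) := by
  have ht0 : 0 < t := by linarith
  have hpow : (D * t ^ (-β)) ^ p = D ^ p * t ^ (-(β * p)) := by
    rw [mul_rpow hD.le (rpow_nonneg ht0.le _), ← rpow_mul ht0.le, neg_mul]
  have hb : t ^ (-b) ≤ t ^ (-(β * p)) := rpow_le_rpow_of_exponent_le ht (by linarith)
  have hβ1 : t ^ (-(β + 1)) ≤ t ^ (-(β * p)) := rpow_le_rpow_of_exponent_le ht (by linarith)
  have hpos : 0 < t ^ (-(β * p)) := rpow_pos_of_pos ht0 _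
  calc a' ≤ c₁ * t ^ (-b) - c₀ * (D ^ p * t ^ (-(β * p))) := by rw [← hpow]; linarith
    _ ≤ (c₁ - c₀ * D ^ p) * t ^ (-(β * p)) := by nlinarith
    _ < -(β * D) * t ^ (-(β * p)) := by gcongr; linarith
    _ ≤ -(β * D) * t ^ (-(β + 1)) := by
      have : 0 ≤ β * D := by positivity
      nlinarith

theorem barrier_decay_lemma_general (c₀ c₁ p b β : ℝ) (hc₀ : 0 < c₀) (hc₁ : 0 < c₁)
    (hp : 1 < p) (hβ : 0 < β)
    (h1 : β * p ≤ b) (h2 : β * p ≤ β + 1)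
    (A : ℝ → ℝ) (hA : ContDiff ℝ 1 A)
    (hdiff : ∀ X ≥ (0:ℝ), deriv A X + c₀ * A X ^ p ≤ c₁ * (X + 1) ^ (-b)) :
    ∃ D > (0:ℝ), ∀ X ≥ (0:ℝ), A X ≤ D * (X + 1) ^ (-β) := by
  obtain ⟨D, ⟨hD_large, hD0⟩, hDA⟩ := ((eventually_add_mul_lt_mul_rpow hc₀ hp c₁ β).and
    (eventually_gt_atTop 0)).and (eventually_ge_atTop (A 0)) |>.exists
  refine ⟨D, hD0, fun X hX => ?_⟩
  have hA' (x : ℝ) : HasDerivAt A (deriv A x) x :=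
    (hA.differentiable one_ne_zero x).hasDerivAt
  have hB (x : ℝ) (hx : 0 ≤ x) := hasDerivAt_mul_add_one_rpow_neg D β (x := x) (by linarith)
  refine image_le_of_deriv_right_lt_deriv_boundary' hA.continuous.continuousOn
    (fun x _ => (hA' x).hasDerivWithinAt) (by simpa using hDA)
    (fun x hx => (hB x hx.1).continuousAt.continuousWithinAt)
    (fun x hx => (hB x hx.1).hasDerivWithinAt) (fun x hx htouch => ?_) ⟨hX, le_rfl⟩
  have hineq := hdiff x hx.1
  rw [htouch] at hineq
  exact lt_neg_mul_rpow_of_touching hc₁.le hβ.le hD0 h1 h2 hD_large (by linarith [hx.1]) hineq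

theorem barrier_decay_lemma (c₀ c₁ p b β : ℝ) (hc₀ : 0 < c₀) (hc₁ : 0 < c₁)
    (hp : 1 < p) (hb : 0 < b) (hβ : 0 < β)
    (h1 : β * p ≤ b) (h2 : β * p ≤ β + 1)
    (A : ℝ → ℝ) (hA : ContDiff ℝ 1 A) (hAnn : ∀ X ≥ (0:ℝ), 0 ≤ A X)
    (hdiff : ∀ X ≥ (0:ℝ), deriv A X + c₀ * A X ^ p ≤ c₁ * (X + 1) ^ (-b)) :
    ∃ D > (0:ℝ), ∀ X ≥ (0:ℝ), A X ≤ D * (X + 1) ^ (-β) :=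
  barrier_decay_lemma_general c₀ c₁ p b β hc₀ hc₁ hp hβ h1 h2 A hA hdiff
end

section
/- Let c₀, c₁ > 0, p > 1, q > 1, a ≥ 0, b > 0, β > 0 satisfy a + β·p ≤ min(b, β+1) and β·q ≤ min(b, β+1). Let A : [0,∞) → [0,∞) be continuously differentiable and satisfy A'(X) + c₀·min{ (X+1)^{−a}·A(X)^p , A(X)^q } ≤ c₁·(X+1)^{−b} for all X ≥ 0. Then there exists D > 0 (depending only on c₀, c₁, p, q, a, β, and A(0)) such that A(X) ≤ D·(X+1)^{−β} for all X ≥ 0. -/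
/-!
For `D` large, `X ↦ D * (X + 1) ^ (-β)` is an upper barrier. At a contact point `A X = D t ^ (-β)`,
`t = X + 1 ≥ 1`, both branches of the dissipation are at least `D ^ min p q * t ^ (-m)` with
`m = min b (β + 1)`, because `a + β p ≤ m` and `β q ≤ m`, while the forcing `c₁ t ^ (-b)` and the
barrier slope `β D t ^ (-β - 1)` are at most of order `t ^ (-m)`. Since `D ^ min p q` outgrows
`β D + c₁`, the derivative of `A` lies strictly below that of the barrier at every contact, so `A`
never crosses it.
-/

open Filter Set

lemma eventually_mul_add_lt_mul_rpow {c₀ r : ℝ} (hc₀ : 0 < c₀) (hr : 1 < r) (β c₁ : ℝ) :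
    ∀ᶠ D in atTop, β * D + c₁ < c₀ * D ^ r := by
  have hgrowth : Tendsto (fun D : ℝ => D * (c₀ * D ^ (r - 1) - β) - c₁) atTop atTop :=
    tendsto_atTop_add_const_right _ _ <| tendsto_id.atTop_mul_atTop₀ <|
      tendsto_atTop_add_const_right _ _ <| (tendsto_rpow_atTop (by linarith)).const_mul_atTop hc₀
  filter_upwards [hgrowth.eventually_gt_atTop 0, eventually_gt_atTop 0] with D hD hDpos
  have hsplit : D ^ r = D * D ^ (r - 1) := by
    rw [← Real.rpow_one_add' hDpos.le (by linarith)]; ring_nf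
  rw [hsplit]; linarith

lemma rpow_mul_rpow_neg_le_rpow_mul_rpow_neg {D t r p s m : ℝ} (hD : 1 ≤ D) (ht : 1 ≤ t)
    (hrp : r ≤ p) (hsm : s ≤ m) : D ^ r * t ^ (-m) ≤ D ^ p * t ^ (-s) :=
  mul_le_mul (Real.rpow_le_rpow_of_exponent_le hD hrp)
    (Real.rpow_le_rpow_of_exponent_le ht (neg_le_neg hsm))
    (by positivity) (by positivity)

lemma mul_rpow_neg_rpow {D t β p : ℝ} (hD : 0 ≤ D) (ht : 0 ≤ t) :
    (D * t ^ (-β)) ^ p = D ^ p * t ^ (-(β * p)) := by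
  rw [Real.mul_rpow hD (by positivity), ← Real.rpow_mul ht, neg_mul]

lemma rpow_min_mul_rpow_neg_le_min {D t a β p q m : ℝ} (hD : 1 ≤ D) (ht : 1 ≤ t)
    (hp : a + β * p ≤ m) (hq : β * q ≤ m) :
    D ^ min p q * t ^ (-m) ≤ min (t ^ (-a) * (D * t ^ (-β)) ^ p) ((D * t ^ (-β)) ^ q) := by
  have ht₀ : 0 < t := by linarith
  rw [mul_rpow_neg_rpow (by linarith) ht₀.le, mul_rpow_neg_rpow (by linarith) ht₀.le]
  refine le_min ?_ (rpow_mul_rpow_neg_le_rpow_mul_rpow_neg hD ht (min_le_right p q) hq)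
  calc D ^ min p q * t ^ (-m) ≤ D ^ p * t ^ (-(a + β * p)) :=
        rpow_mul_rpow_neg_le_rpow_mul_rpow_neg hD ht (min_le_left p q) hp
    _ = t ^ (-a) * (D ^ p * t ^ (-(β * p))) := by
        rw [neg_add, Real.rpow_add ht₀]; ring

lemma lt_neg_mul_rpow_of_add_mul_min_le {d c₀ c₁ D t a b β p q : ℝ} (hc₀ : 0 ≤ c₀)
    (hc₁ : 0 ≤ c₁) (hβ : 0 ≤ β) (hD : 1 ≤ D) (ht : 1 ≤ t)
    (hp : a + β * p ≤ min b (β + 1)) (hq : β * q ≤ min b (β + 1))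
    (hDgrowth : β * D + c₁ < c₀ * D ^ min p q)
    (hd : d + c₀ * min (t ^ (-a) * (D * t ^ (-β)) ^ p) ((D * t ^ (-β)) ^ q) ≤ c₁ * t ^ (-b)) :
    d < -(β * D) * t ^ (-β - 1) := by
  set m := min b (β + 1)
  have hdissip := mul_le_mul_of_nonneg_left (rpow_min_mul_rpow_neg_le_min hD ht hp hq) hc₀
  have hforcing : c₁ * t ^ (-b) ≤ c₁ * t ^ (-m) :=
    mul_le_mul_of_nonneg_left
      (Real.rpow_le_rpow_of_exponent_le ht (neg_le_neg (min_le_left _ _))) hc₁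
  have hbarrier : β * D * t ^ (-β - 1) ≤ β * D * t ^ (-m) :=
    mul_le_mul_of_nonneg_left
      (Real.rpow_le_rpow_of_exponent_le ht (by linarith [min_le_right b (β + 1)])) (by positivity)
  have hgap : 0 < (c₀ * D ^ min p q - β * D - c₁) * t ^ (-m) :=
    mul_pos (by linarith) (by positivity)
  linarith

lemma hasDerivAt_mul_add_one_rpow {D β x : ℝ} (hx : -1 < x) :
    HasDerivAt (fun X => D * (X + 1) ^ (-β)) (-(β * D) * (x + 1) ^ (-β - 1)) x := by
  have h := (((hasDerivAt_id x).add_const 1).rpow_const (p := -β)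
    (Or.inl (by simp only [id_eq]; linarith))).const_mul D
  simp only [id_eq] at h
  exact h.congr_deriv (by ring)

theorem barrier_decay_lemma_two_branch_general (c₀ c₁ p q a b β : ℝ)
    (hc₀ : 0 < c₀) (hc₁ : 0 < c₁) (hp : 1 < p) (hq : 1 < q)
    (hβ : 0 < β)
    (h1 : a + β * p ≤ min b (β + 1)) (h2 : β * q ≤ min b (β + 1))
    (A : ℝ → ℝ) (hA : ContDiff ℝ 1 A)
    (hdiff : ∀ X ≥ (0:ℝ),
      deriv A X + c₀ * min ((X + 1) ^ (-a) * A X ^ p) (A X ^ q) ≤ c₁ * (X + 1) ^ (-b)) :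
    ∃ D > (0:ℝ), ∀ X ≥ (0:ℝ), A X ≤ D * (X + 1) ^ (-β) := by
  obtain ⟨D, hD, hDgrowth⟩ := ((eventually_ge_atTop (max 1 (A 0))).and
    (eventually_mul_add_lt_mul_rpow hc₀ (lt_min hp hq) β c₁)).exists
  have hD₁ : 1 ≤ D := le_of_max_le_left hD
  have hbarrier : ∀ x ∈ Ici (0 : ℝ), HasDerivAt (fun X => D * (X + 1) ^ (-β))
      (-(β * D) * (x + 1) ^ (-β - 1)) x :=
    fun x hx => hasDerivAt_mul_add_one_rpow (by linarith [mem_Ici.mp hx])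
  refine ⟨D, by linarith, fun X hX => ?_⟩
  refine image_le_of_deriv_right_lt_deriv_boundary' (a := 0) (b := X)
    hA.continuous.continuousOn
    (fun x _ => ((hA.differentiable one_ne_zero) x).hasDerivAt.hasDerivWithinAt)
    (by simpa using le_of_max_le_right hD)
    (fun x hx => (hbarrier x hx.1).continuousAt.continuousWithinAt)
    (fun x hx => (hbarrier x hx.1).hasDerivWithinAt)
    (fun x hx hcontact => ?_) ⟨hX, le_rfl⟩
  refine lt_neg_mul_rpow_of_add_mul_min_le hc₀.le hc₁.le hβ.le hD₁ (by linarith [hx.1]) h1 h2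
    hDgrowth ?_
  simpa only [hcontact] using hdiff x hx.1

theorem barrier_decay_lemma_two_branch (c₀ c₁ p q a b β : ℝ)
    (hc₀ : 0 < c₀) (hc₁ : 0 < c₁) (hp : 1 < p) (hq : 1 < q)
    (ha : 0 ≤ a) (hb : 0 < b) (hβ : 0 < β)
    (h1 : a + β * p ≤ min b (β + 1)) (h2 : β * q ≤ min b (β + 1))
    (A : ℝ → ℝ) (hA : ContDiff ℝ 1 A) (hAnn : ∀ X ≥ (0:ℝ), 0 ≤ A X)
    (hdiff : ∀ X ≥ (0:ℝ),
      deriv A X + c₀ * min ((X + 1) ^ (-a) * A X ^ p) (A X ^ q) ≤ c₁ * (X + 1) ^ (-b)) :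
    ∃ D > (0:ℝ), ∀ X ≥ (0:ℝ), A X ≤ D * (X + 1) ^ (-β) :=
  barrier_decay_lemma_two_branch_general c₀ c₁ p q a b β hc₀ hc₁ hp hq hβ h1 h2 A hA hdiff
end
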